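/- arXiv:math/9201304 — 9 statements merged into one kernel-verified Lean document; each statement's English description precedes it below -/
import Mathlib

section
/- Let G be a group, H a subgroup of G, and S, T subsets of G. Write H·S for the set {h*s : h ∈ H, s ∈ S}. Suppose that for every σ ∈ S and every τ ∈ T the product σ*τ lies in H·S. Then for every α ∈ H·S and every β in the submonoid of G generated by T (i.e., every β expressible as a finite, possibly empty, product of elements of T), the product α*β lies in H·S. -/
/-!
Since `H * H = H`, we get `H * S * T = H * (S * T) ⊆ H * H * S = H * S`; so `T` lies in the
submonoid of right multipliers of `H * S`, hence so does the submonoid it generates.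
-/

open scoped Pointwise

def Set.rightMultipliers {M : Type*} [Monoid M] (A : Set M) : Submonoid M where
  carrier := {b | ∀ a ∈ A, a * b ∈ A}
  one_mem' a ha := by rwa [mul_one]
  mul_mem' hb hc a ha := by rw [← mul_assoc]; exact hc _ (hb a ha)

theorem Set.mul_mem_of_mem_closure {M : Type*} [Monoid M] {A T : Set M}
    (hAT : A * T ⊆ A) {a b : M} (ha : a ∈ A) (hb : b ∈ Submonoid.closure T) : a * b ∈ A := by
  have hT : T ⊆ A.rightMultipliers := fun t ht a ha => hAT (Set.mul_mem_mul ha ht)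
  exact (Submonoid.closure_le.mpr hT) hb a ha

theorem Submonoid.coe_mul_mul_subset {M : Type*} [Monoid M] (H : Submonoid M) {S T : Set M}
    (hST : S * T ⊆ (H : Set M) * S) : (H : Set M) * S * T ⊆ (H : Set M) * S :=
  calc (H : Set M) * S * T = H * (S * T) := mul_assoc _ _ _
    _ ⊆ H * (H * S) := Set.mul_subset_mul_left hST
    _ = H * H * S := (mul_assoc _ _ _).symm
    _ = H * S := by rw [Submonoid.coe_mul_self_eq]

/-- If every product `σ * τ` with `σ ∈ S`, `τ ∈ T` lies in `H·S = {h * s : h ∈ H, s ∈ S}`,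
then `H·S` is closed under right multiplication by any finite product of elements of `T`. -/
theorem stmt_0 {G : Type*} [Group G] (H : Subgroup G) (S T : Set G)
    (hST : ∀ σ ∈ S, ∀ τ ∈ T, ∃ h ∈ H, ∃ s ∈ S, σ * τ = h * s) :
    ∀ α, (∃ h ∈ H, ∃ s ∈ S, α = h * s) →
      ∀ β ∈ Submonoid.closure T, ∃ h ∈ H, ∃ s ∈ S, α * β = h * s := by
  have mem_HS : ∀ x, x ∈ (H : Set G) * S ↔ ∃ h ∈ H, ∃ s ∈ S, x = h * s := fun x => by
    simp only [Set.mem_mul, SetLike.mem_coe, eq_comm]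
  have hST' : S * T ⊆ (H.toSubmonoid : Set G) * S := by
    rintro _ ⟨σ, hσ, τ, hτ, rfl⟩
    exact (mem_HS _).mpr (hST σ hσ τ hτ)
  intro α hα β hβ
  exact (mem_HS _).mp <|
    Set.mul_mem_of_mem_closure (H.toSubmonoid.coe_mul_mul_subset hST') ((mem_HS α).mpr hα) hβ
end

section
/- Let G be a group, H a subgroup of G, and S, T subsets of G with 1 ∈ S. Write H·S for the set {h*s : h ∈ H, s ∈ S}. Assume: (i) every element of the subgroup ⟨T⟩ generated by T has finite order; (ii) H ⊆ ⟨T⟩ and S ⊆ ⟨T⟩; (iii) T ⊆ H·S; and (iv) for every σ ∈ S and τ ∈ T, the product σ*τ lies in H·S. Then H·S = ⟨T⟩. -/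
/-- Up-to-date data structure: `H·S` equals the subgroup generated by `T`. -/
theorem stmt_1 {G : Type*} [Group G] (H : Subgroup G) (S T : Set G)
    (hone : (1 : G) ∈ S)
    (hfin : ∀ g ∈ Subgroup.closure T, IsOfFinOrder g)
    (hH : (H : Set G) ⊆ (Subgroup.closure T : Set G))
    (hS : S ⊆ (Subgroup.closure T : Set G))
    (hT : ∀ τ ∈ T, ∃ h ∈ H, ∃ s ∈ S, τ = h * s)
    (hST : ∀ σ ∈ S, ∀ τ ∈ T, ∃ h ∈ H, ∃ s ∈ S, σ * τ = h * s) :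
    {x : G | ∃ h ∈ H, ∃ s ∈ S, x = h * s} = (Subgroup.closure T : Set G) := by
  have hmono : (Submonoid.closure T : Set G) ⊆ (Subgroup.closure T : Set G) := by
    intro x hx
    exact Submonoid.closure_le.mpr (Subgroup.subset_closure (k := T)) hx
  -- Submonoid.closure T is closed under inverses
  have hinv : ∀ x ∈ Submonoid.closure T, x⁻¹ ∈ Submonoid.closure T := by
    intro x hx
    have hfo : IsOfFinOrder x := hfin x (hmono hx)
    have hn : 0 < orderOf x := hfo.orderOf_pos
    have h1 : x * x ^ (orderOf x - 1) = 1 := by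
      rw [← pow_succ', Nat.sub_add_cancel hn]
      exact pow_orderOf_eq_one x
    have : x⁻¹ = x ^ (orderOf x - 1) := inv_eq_of_mul_eq_one_right h1
    rw [this]
    exact pow_mem hx _
  set K : Subgroup G := { toSubmonoid := Submonoid.closure T, inv_mem' := fun {x} hx => hinv x hx } with hK
  have hsub : (Subgroup.closure T : Set G) ⊆ (Submonoid.closure T : Set G) := by
    intro x hx
    have : Subgroup.closure T ≤ K := (Subgroup.closure_le K).mpr Submonoid.subset_closure
    exact this hx
  set Γ : Set G := {x : G | ∃ h ∈ H, ∃ s ∈ S, x = h * s} with hΓ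
  apply Set.Subset.antisymm
  · rintro x ⟨h, hh, s, hs, rfl⟩
    exact mul_mem (hH hh) (hS hs)
  · intro g hg
    have hg' : g ∈ Submonoid.closure T := hsub hg
    have key : ∀ y ∈ Γ, y * g ∈ Γ := by
      refine Submonoid.closure_induction (motive := fun x _ => ∀ y ∈ Γ, y * x ∈ Γ) ?_ ?_ ?_ hg'
      · rintro τ hτ y ⟨h, hh, s, hs, rfl⟩
        obtain ⟨h', hh', s', hs', heq⟩ := hST s hs τ hτ
        exact ⟨h * h', mul_mem hh hh', s', hs', by rw [mul_assoc, heq, mul_assoc]⟩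
      · intro y hy
        simpa using hy
      · intro a b _ _ ha hb y hy
        rw [← mul_assoc]
        exact hb _ (ha y hy)
    simpa using key 1 ⟨1, one_mem H, 1, hone, by simp⟩
end

section
/- Let n ≥ 1 and suppose that for each k with 2 ≤ k ≤ n, π_k is a permutation of {1,…,n} that fixes every point greater than k and maps k to k−1. Then the subgroup of the symmetric group on {1,…,n} generated by {π₂, π₃, …, π_n} is the full symmetric group on {1,…,n}. -/
/-- Permutations `π k` (for `2 ≤ k ≤ n`) fixing all points `> k` and mapping `k ↦ k - 1`
generate the full symmetric group on `{1, …, n}`. -/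
theorem stmt_6 (n : ℕ) (hn : 1 ≤ n) (π : ℕ → Equiv.Perm (Set.Icc 1 n))
    (hfix : ∀ k, 2 ≤ k → k ≤ n → ∀ x : Set.Icc 1 n, k < (x : ℕ) → π k x = x)
    (hmap : ∀ k (h2 : 2 ≤ k) (hkn : k ≤ n),
      π k ⟨k, Set.mem_Icc.mpr ⟨le_trans one_le_two h2, hkn⟩⟩ =
        ⟨k - 1, Set.mem_Icc.mpr ⟨by omega, by omega⟩⟩) :
    Subgroup.closure {g : Equiv.Perm (Set.Icc 1 n) | ∃ k, 2 ≤ k ∧ k ≤ n ∧ g = π k} = ⊤ := by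
  set S : Set (Equiv.Perm (Set.Icc 1 n)) := {g | ∃ k, 2 ≤ k ∧ k ≤ n ∧ g = π k} with hS
  rw [eq_top_iff]
  have key : ∀ k (τ : Equiv.Perm (Set.Icc 1 n)),
      (∀ x : Set.Icc 1 n, k < (x : ℕ) → τ x = x) → τ ∈ Subgroup.closure S := by
    intro k
    induction k with
    | zero =>
      intro τ h
      have hτ : τ = 1 := by
        ext x
        have hx1 : 1 ≤ (x : ℕ) := (Set.mem_Icc.mp x.2).1
        have := h x (by omega)
        simpa using congrArg Subtype.val this
      rw [hτ]; exact one_mem _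
    | succ k ih =>
      intro τ h
      by_cases hkn : k + 1 ≤ n
      · by_cases hk0 : k = 0
        · subst hk0
          have hτ : τ = 1 := by
            ext x
            rcases Nat.lt_or_ge 1 (x : ℕ) with hx | hx
            · simpa using congrArg Subtype.val (h x hx)
            · have hx1 : (x : ℕ) = 1 := by
                have := (Set.mem_Icc.mp x.2).1; omega
              set y := τ x with hy
              rcases Nat.lt_or_ge 1 (y : ℕ) with hy1 | hy1
              · have hyy : τ y = y := h y hy1
                have : x = y := τ.injective (by rw [hyy, ← hy])
                simp [← this]
              · have hy2 : (y : ℕ) = 1 := by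
                  have := (Set.mem_Icc.mp y.2).1; omega
                show (y : ℕ) = (x : ℕ)
                omega
          rw [hτ]; exact one_mem _
        · -- k ≥ 1, so 2 ≤ k + 1 ≤ n
          have hk1 : 1 ≤ k := by omega
          have h2 : 2 ≤ k + 1 := by omega
          set a1 : Set.Icc 1 n := ⟨k + 1, Set.mem_Icc.mpr ⟨by omega, hkn⟩⟩ with ha1
          set ak : Set.Icc 1 n := ⟨k, Set.mem_Icc.mpr ⟨by omega, by omega⟩⟩ with hak
          set j := τ a1 with hj
          have hj_le : (j : ℕ) ≤ k + 1 := by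
            by_contra hc
            push_neg at hc
            have hjj : τ j = j := h j hc
            have : a1 = j := τ.injective (by rw [hjj, ← hj])
            have := congrArg Subtype.val this
            simp only [ha1] at this
            omega
          by_cases hjk : (j : ℕ) = k + 1
          · -- τ fixes everything > k
            apply ih
            intro x hx
            rcases Nat.lt_or_ge (k + 1) (x : ℕ) with hx' | hx'
            · exact h x hx'
            · have hxk : (x : ℕ) = k + 1 := by omega
              have hxa : x = a1 := Subtype.ext (by simp [ha1, hxk])
              have hja : j = a1 := Subtype.ext (by simp [ha1, hjk])
              rw [hxa, ← hj, hja]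
          · have hjk' : (j : ℕ) ≤ k := by omega
            set t : Equiv.Perm (Set.Icc 1 n) := Equiv.swap ak j with ht
            have htmem : t ∈ Subgroup.closure S := by
              apply ih
              intro x hx
              apply Equiv.swap_apply_of_ne_of_ne
              · intro hc; have := congrArg Subtype.val hc; simp [hak] at this; omega
              · intro hc; have := congrArg Subtype.val hc; omega
            have hπmem : π (k + 1) ∈ Subgroup.closure S :=
              Subgroup.subset_closure ⟨k + 1, h2, hkn, rfl⟩
            set h0 : Equiv.Perm (Set.Icc 1 n) := t * π (k + 1) with hh0
            have hh0mem : h0 ∈ Subgroup.closure S := mul_mem htmem hπmem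
            have hπa1 : π (k + 1) a1 = ak := by
              have := hmap (k + 1) h2 hkn
              rw [ha1, hak]
              convert this using 2
              omega
            have hh0a1 : h0 a1 = j := by
              rw [hh0, Equiv.Perm.mul_apply, hπa1, ht, Equiv.swap_apply_left]
            have hτ'mem : h0⁻¹ * τ ∈ Subgroup.closure S := by
              apply ih
              intro x hx
              rcases Nat.lt_or_ge (k + 1) (x : ℕ) with hx' | hx'
              · have hτx : τ x = x := h x hx'
                have hπx : π (k + 1) x = x := hfix (k + 1) h2 hkn x hx'
                have htx : t x = x := by
                  apply Equiv.swap_apply_of_ne_of_ne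
                  · intro hc; have := congrArg Subtype.val hc; simp [hak] at this; omega
                  · intro hc; have := congrArg Subtype.val hc; omega
                have hh0x : h0 x = x := by
                  rw [hh0, Equiv.Perm.mul_apply, hπx, htx]
                rw [Equiv.Perm.mul_apply, hτx]
                nth_rewrite 1 [← hh0x]
                exact Equiv.symm_apply_apply _ _
              · have hxk : (x : ℕ) = k + 1 := by omega
                have hxa : x = a1 := Subtype.ext (by simp [ha1, hxk])
                rw [hxa, Equiv.Perm.mul_apply, ← hj, ← hh0a1]
                exact Equiv.symm_apply_apply _ _
            have : τ = h0 * (h0⁻¹ * τ) := by group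
            rw [this]
            exact mul_mem hh0mem hτ'mem
      · apply ih
        intro x hx
        have := (Set.mem_Icc.mp x.2).2
        omega
  intro τ _
  apply key n τ
  intro x hx
  have := (Set.mem_Icc.mp x.2).2
  omega
end

section
/- Let k ≥ 2 and let ρ be a permutation of {1,…,k} that fixes both k−1 and k. Let α and β be permutations of {1,…,k}, each fixing the point k and each having the same cycle type as ρ. Then the number of permutations π of {1,…,k} with π(k) = k−1 and π⁻¹ ∘ ρ ∘ π = α equals the number of permutations π of {1,…,k} with π(k) = k−1 and π⁻¹ ∘ ρ ∘ π = β. -/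
/-! Since `α` and `β` have the same cycle type they are conjugate, say `c * α * c⁻¹ = β`. The
transposition exchanging `K` and `c⁻¹ K` commutes with `α`, both points being fixed by `α`, so
correcting `c⁻¹` by it gives a conjugator `σ` from `α` to `β` that fixes `K`. Right
multiplication by `σ` then maps the conjugators of `ρ` onto `α` sending `K` to `K'` bijectively
onto those of `ρ` onto `β`. -/

namespace Equiv.Perm

variable {X : Type*}

theorem exists_conj_eq_of_isConj_of_apply_eq [DecidableEq X] {f g : Perm X} {x : X}
    (hf : f x = x) (hg : g x = x) (hfg : IsConj f g) :
    ∃ σ : Perm X, σ x = x ∧ σ⁻¹ * f * σ = g := by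
  obtain ⟨c, rfl⟩ := isConj_iff.mp hfg
  have hfc : f (c⁻¹ x) = c⁻¹ x := eq_inv_iff_eq.mpr hg
  have hswap : swap x (c⁻¹ x) * f * swap x (c⁻¹ x) = f := by
    rw [mul_assoc, mul_swap_eq_swap_mul f, hf, hfc, ← mul_assoc, swap_mul_self, one_mul]
  refine ⟨swap x (c⁻¹ x) * c⁻¹, by simp [swap_apply_right], ?_⟩
  calc (swap x (c⁻¹ x) * c⁻¹)⁻¹ * f * (swap x (c⁻¹ x) * c⁻¹)
      = c * (swap x (c⁻¹ x) * f * swap x (c⁻¹ x)) * c⁻¹ := by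
        simp only [mul_inv_rev, inv_inv, swap_inv, mul_assoc]
    _ = c * f * c⁻¹ := by rw [hswap]

theorem ncard_setOf_conj_eq_of_conj_eq {ρ f g σ : Perm X} {x y : X} (hσ : σ x = x)
    (hfg : σ⁻¹ * f * σ = g) :
    {π : Perm X | π x = y ∧ π⁻¹ * ρ * π = f}.ncard =
      {π : Perm X | π x = y ∧ π⁻¹ * ρ * π = g}.ncard := by
  have himage : {π : Perm X | π x = y ∧ π⁻¹ * ρ * π = g} =
      Equiv.mulRight σ '' {π : Perm X | π x = y ∧ π⁻¹ * ρ * π = f} := by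
    subst hfg
    have hσ' : σ⁻¹ x = x := by rw [inv_eq_iff_eq, hσ]
    ext π
    simp only [Equiv.image_eq_preimage_symm, Set.mem_preimage, Set.mem_ofPred_eq,
      Equiv.mulRight_symm_apply, mul_apply, hσ']
    rw [show (π * σ⁻¹)⁻¹ * ρ * (π * σ⁻¹) = σ * (π⁻¹ * ρ * π) * σ⁻¹ by group]
    refine and_congr_right fun _ => ⟨fun h => ?_, fun h => ?_⟩
    · rw [h]; group
    · rw [← h]; group
  rw [himage, Set.ncard_image_of_injective _ (Equiv.mulRight σ).injective]

end Equiv.Perm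

theorem stmt_10_general (k : ℕ) (ρ α β : Equiv.Perm (Set.Icc 1 k))
    (K K' : Set.Icc 1 k)
    (hαK : α K = K) (hβK : β K = K)
    (hα : α.cycleType = ρ.cycleType) (hβ : β.cycleType = ρ.cycleType) :
    Set.ncard {π : Equiv.Perm (Set.Icc 1 k) | π K = K' ∧ π⁻¹ * ρ * π = α} =
      Set.ncard {π : Equiv.Perm (Set.Icc 1 k) | π K = K' ∧ π⁻¹ * ρ * π = β} := by
  obtain ⟨σ, hσK, hσ⟩ := Equiv.Perm.exists_conj_eq_of_isConj_of_apply_eq hαK hβK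
    (Equiv.Perm.isConj_iff_cycleType_eq.mpr (hα.trans hβ.symm))
  exact Equiv.Perm.ncard_setOf_conj_eq_of_conj_eq hσK hσ

/-- Conjugates of a permutation `ρ` of `{1,…,k}` fixing `k-1` and `k` are uniformly
distributed: for any two permutations `α`, `β` fixing `k` with the same cycle type as `ρ`,
the number of permutations `π` with `π k = k - 1` conjugating `ρ` to `α` equals the
number conjugating `ρ` to `β`. -/
theorem stmt_10 (k : ℕ) (hk : 2 ≤ k) (ρ α β : Equiv.Perm (Set.Icc 1 k))
    (K K' : Set.Icc 1 k) (hK : (K : ℕ) = k) (hK' : (K' : ℕ) = k - 1)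
    (hρK : ρ K = K) (hρK' : ρ K' = K')
    (hαK : α K = K) (hβK : β K = K)
    (hα : α.cycleType = ρ.cycleType) (hβ : β.cycleType = ρ.cycleType) :
    Set.ncard {π : Equiv.Perm (Set.Icc 1 k) | π K = K' ∧ π⁻¹ * ρ * π = α} =
      Set.ncard {π : Equiv.Perm (Set.Icc 1 k) | π K = K' ∧ π⁻¹ * ρ * π = β} :=
  stmt_10_general k ρ α β K K' hαK hβK hα hβ
end

section
/- For all integers r, l, k with 2 ≤ r < l < k, the following identity holds in the rational numbers: (1/((k−1)(k−2)⋯(k−r))) · ( (l−1)(l−2)⋯(l−r) + (r/l) · Σ_{q=l+1}^{k−1} (q−1)(q−2)⋯(q−r+1) ) = 1/l + ((l−1)(l−2)⋯(l−r)·(l−r−1)) / ((k−1)(k−2)⋯(k−r)·(l−r)). -/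
private lemma split_top (r : ℤ) (h2r : 2 ≤ r) (x : ℚ) :
    ∏ i ∈ Finset.Icc 1 r, (x - (i:ℚ)) = (∏ i ∈ Finset.Icc 1 (r-1), (x - (i:ℚ))) * (x - (r:ℚ)) := by
  rw [show Finset.Icc (1:ℤ) r = insert r (Finset.Ico 1 r) from
    (Finset.Ico_insert_right (by omega)).symm, Finset.prod_insert (by simp),
    show Finset.Ico (1:ℤ) r = Finset.Icc 1 (r-1) by ext y; simp]
  ring

/-- shift lemma: n * G n = (n+1-r) * G (n+1) -/
private lemma shiftG (r : ℤ) (h2r : 2 ≤ r) (n : ℚ) :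
    n * ∏ i ∈ Finset.Icc 1 (r-1), (n - (i : ℚ)) =
      (n + 1 - (r : ℚ)) * ∏ i ∈ Finset.Icc 1 (r-1), (n + 1 - (i : ℚ)) := by
  have h1 : ∏ i ∈ Finset.Icc 1 (r-1), (n - (i : ℚ)) =
      ∏ i ∈ Finset.Icc 2 r, (n + 1 - (i : ℚ)) := by
    have : Finset.Icc (2:ℤ) r = Finset.map (addRightEmbedding 1) (Finset.Icc 1 (r-1)) := by
      rw [Finset.map_add_right_Icc]; norm_num
    rw [this, Finset.prod_map]
    exact Finset.prod_congr rfl fun i _ => by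
      simp only [addRightEmbedding_apply]; push_cast; ring
  have h2 : n * ∏ i ∈ Finset.Icc 2 r, (n + 1 - (i : ℚ)) =
      ∏ i ∈ Finset.Icc 1 r, (n + 1 - (i : ℚ)) := by
    rw [show Finset.Icc (1:ℤ) r = insert 1 (Finset.Icc 2 r) from by ext y; simp; omega,
      Finset.prod_insert (by simp)]
    norm_num
  rw [h1, h2, split_top r h2r (n+1)]
  ring

private lemma sum_tele (r l : ℤ) (h2r : 2 ≤ r) :
    ∀ n : ℤ, l ≤ n →
    (r : ℚ) * ∑ q ∈ Finset.Icc (l+1) n, ∏ i ∈ Finset.Icc 1 (r-1), ((q : ℚ) - (i : ℚ)) =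
      (n : ℚ) * (∏ i ∈ Finset.Icc 1 (r-1), ((n : ℚ) - (i : ℚ))) -
      (l : ℚ) * (∏ i ∈ Finset.Icc 1 (r-1), ((l : ℚ) - (i : ℚ))) := by
  refine Int.le_induction ?_ ?_
  · simp [Finset.Icc_eq_empty_of_lt (by omega : l < l + 1)]
  · intro n hn ih
    have hsplit : Finset.Icc (l+1) (n+1) = insert (n+1) (Finset.Icc (l+1) n) := by
      ext y; simp; omega
    rw [hsplit, Finset.sum_insert (by simp)]
    have key := shiftG r h2r (n : ℚ)
    have hGn1 : ∏ i ∈ Finset.Icc 1 (r-1), ((n : ℚ) + 1 - (i : ℚ)) =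
        ∏ i ∈ Finset.Icc 1 (r-1), ((((n+1) : ℤ) : ℚ) - (i : ℚ)) :=
      Finset.prod_congr rfl fun i _ => by push_cast; ring
    rw [hGn1] at key
    push_cast
    push_cast at ih key
    linarith [ih, key]

/-- Exact evaluation of the probability `Pr(j_l = l)` in the average-case analysis. -/
theorem stmt_13 (r l k : ℤ) (h2r : 2 ≤ r) (hrl : r < l) (hlk : l < k) :
    (1 / ∏ i ∈ Finset.Icc 1 r, ((k : ℚ) - (i : ℚ))) *
        ((∏ i ∈ Finset.Icc 1 r, ((l : ℚ) - (i : ℚ))) +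
          ((r : ℚ) / (l : ℚ)) *
            ∑ q ∈ Finset.Icc (l + 1) (k - 1),
              ∏ i ∈ Finset.Icc 1 (r - 1), ((q : ℚ) - (i : ℚ))) =
      1 / (l : ℚ) +
        (∏ i ∈ Finset.Icc 1 r, ((l : ℚ) - (i : ℚ))) * ((l : ℚ) - (r : ℚ) - 1) /
          ((∏ i ∈ Finset.Icc 1 r, ((k : ℚ) - (i : ℚ))) * ((l : ℚ) - (r : ℚ))) := by
  set Pk := ∏ i ∈ Finset.Icc 1 r, ((k : ℚ) - (i : ℚ)) with hPk
  set Pl := ∏ i ∈ Finset.Icc 1 r, ((l : ℚ) - (i : ℚ)) with hPl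
  set Gl := ∏ i ∈ Finset.Icc 1 (r-1), ((l : ℚ) - (i : ℚ)) with hGl
  -- sum evaluation
  have hsum := sum_tele r l h2r (k-1) (by omega)
  -- (k-1) * G(k-1) = Pk
  have hkG : ((k : ℚ) - 1) * ∏ i ∈ Finset.Icc 1 (r-1), (((k-1 : ℤ) : ℚ) - (i : ℚ)) = Pk := by
    have key := shiftG r h2r ((k : ℚ) - 1)
    have e1 : ∏ i ∈ Finset.Icc 1 (r-1), (((k-1 : ℤ) : ℚ) - (i : ℚ)) =
        ∏ i ∈ Finset.Icc 1 (r-1), (((k : ℚ) - 1) - (i : ℚ)) :=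
      Finset.prod_congr rfl fun i _ => by push_cast; ring
    have e2 : ∏ i ∈ Finset.Icc 1 (r-1), (((k : ℚ) - 1) + 1 - (i : ℚ)) =
        ∏ i ∈ Finset.Icc 1 (r-1), ((k : ℚ) - (i : ℚ)) :=
      Finset.prod_congr rfl fun i _ => by ring
    rw [e1, key, e2, hPk, split_top r h2r (k : ℚ)]
    ring
  -- Pl = (l - r) * Gl
  have hPlG : Pl = ((l : ℚ) - (r : ℚ)) * Gl := by
    rw [hPl, hGl, split_top r h2r (l : ℚ)]; ring
  -- nonzeroness
  have hl0 : (l : ℚ) ≠ 0 := by exact_mod_cast (show l ≠ 0 by omega)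
  have hlr : (l : ℚ) - (r : ℚ) ≠ 0 :=
    sub_ne_zero.mpr (by exact_mod_cast (show l ≠ r by omega))
  have hr0 : (r : ℚ) ≠ 0 := by exact_mod_cast (show r ≠ 0 by omega)
  have hPk0 : Pk ≠ 0 := by
    rw [hPk]
    apply Finset.prod_ne_zero_iff.mpr
    intro i hi
    simp only [Finset.mem_Icc] at hi
    exact sub_ne_zero.mpr (by exact_mod_cast (show k ≠ i by omega))
  -- evaluate the sum
  have hS : ∑ q ∈ Finset.Icc (l+1) (k-1), ∏ i ∈ Finset.Icc 1 (r-1), ((q : ℚ) - (i : ℚ)) =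
      (Pk - (l : ℚ) * Gl) / (r : ℚ) := by
    rw [eq_div_iff hr0, ← hkG]
    push_cast at hsum ⊢
    linarith [hsum]
  rw [hS, hPlG]
  field_simp
  ring
end

section
/- For all integers r, l, k with 2 ≤ r < l < k, the following strict inequality holds in the rational numbers: ((l−1)(l−2)⋯(l−r)·(l−r−1)) / ((k−1)(k−2)⋯(k−r)·(l−r)) < l²/k². -/
/-!
Each factor satisfies `(l - i) / (k - i) < l / k`, so the quotient of the two descending products is
below `(l / k) ^ r ≤ (l / k) ^ 2`, while the remaining factor `(l - r - 1) / (l - r)` lies in `[0, 1]`.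
-/

open Finset

section

variable {K : Type*} [Field K] [LinearOrder K] [IsStrictOrderedRing K]

theorem sub_div_sub_lt_div {a b c : K} (hc : 0 < c) (hca : c < a) (hab : a < b) :
    (a - c) / (b - c) < a / b := by
  rw [div_lt_div_iff₀ (by linarith) (by linarith)]
  nlinarith

theorem prod_sub_div_prod_sub_lt_pow {ι : Type*} {s : Finset ι} (hs : s.Nonempty) {f : ι → K}
    {a b : K} (hf : ∀ i ∈ s, 0 < f i ∧ f i < a) (hab : a < b) :
    (∏ i ∈ s, (a - f i)) / ∏ i ∈ s, (b - f i) < (a / b) ^ #s := by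
  rw [← prod_div_distrib, ← prod_const]
  refine prod_lt_prod_of_nonempty (fun i hi => ?_) (fun i hi => ?_) hs
  · obtain ⟨hf0, hfa⟩ := hf i hi
    exact div_pos (by linarith) (by linarith)
  · obtain ⟨hf0, hfa⟩ := hf i hi
    exact sub_div_sub_lt_div hf0 hfa hab

end

/-- The bound `(l-1)⋯(l-r)(l-r-1) / ((k-1)⋯(k-r)(l-r)) < l²/k²` for `2 ≤ r < l < k`. -/
theorem stmt_14 (r l k : ℤ) (h2r : 2 ≤ r) (hrl : r < l) (hlk : l < k) :
    (∏ i ∈ Finset.Icc 1 r, ((l : ℚ) - (i : ℚ))) * ((l : ℚ) - (r : ℚ) - 1) /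
        ((∏ i ∈ Finset.Icc 1 r, ((k : ℚ) - (i : ℚ))) * ((l : ℚ) - (r : ℚ))) <
      (l : ℚ) ^ 2 / (k : ℚ) ^ 2 := by
  have hr : (2 : ℚ) ≤ r := by exact_mod_cast h2r
  have hrl' : (r : ℚ) + 1 ≤ l := by exact_mod_cast hrl
  have hlk' : (l : ℚ) < k := by exact_mod_cast hlk
  have hfactor : ∀ i ∈ Icc 1 r, (0 : ℚ) < i ∧ (i : ℚ) < l := by
    intro i hi
    obtain ⟨h1, h2⟩ := mem_Icc.mp hi
    exact ⟨by exact_mod_cast h1, by exact_mod_cast h2.trans_lt hrl⟩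
  have hpos : 0 ≤ (∏ i ∈ Icc 1 r, ((l : ℚ) - i)) / ∏ i ∈ Icc 1 r, ((k : ℚ) - i) :=
    div_nonneg (prod_nonneg fun i hi => by linarith [hfactor i hi])
      (prod_nonneg fun i hi => by linarith [hfactor i hi])
  have hcard : 2 ≤ #(Icc 1 r) := by rw [Int.card_Icc]; omega
  have hlast : ((l : ℚ) - r - 1) / (l - r) ≤ 1 := (div_le_one (by linarith)).mpr (by linarith)
  rw [mul_div_mul_comm, ← div_pow]
  calc _ ≤ (∏ i ∈ Icc 1 r, ((l : ℚ) - i)) / ∏ i ∈ Icc 1 r, ((k : ℚ) - i) :=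
        mul_le_of_le_one_right hpos hlast
    _ < ((l : ℚ) / k) ^ #(Icc 1 r) :=
        prod_sub_div_prod_sub_lt_pow (nonempty_Icc.mpr (by omega)) hfactor hlk'
    _ ≤ ((l : ℚ) / k) ^ 2 :=
        pow_le_pow_of_le_one (div_nonneg (by linarith) (by linarith)) ((div_le_one (by linarith)).mpr hlk'.le) hcard
end

section
/- Let n ≥ 2 and 0 ≤ s < C(n,2) be integers, and let q, r be the unique integers with 1 ≤ r < q ≤ n and C(n,2) − s − 1 = C(q,2) − r. Then: (a) for every sequence of integers s₁, …, s_n with 1 ≤ s_k ≤ k for all k and Σ_{k=1}^n (s_k − 1) = s, the product ∏_{k=1}^n s_k is at least r·n!/q!; and (b) there exists such a sequence with ∏_{k=1}^n s_k = r·n!/q! (namely s_k = k for q < k ≤ n, s_q = r, and s_k = 1 for k < q). -/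
/-! A sequence with `f n < n` and some lower `f j ≥ 2` can be improved: moving one unit from
`j` to `n` does not increase the product when `f j ≤ f n + 1`, since
`(f j - 1) (f n + 1) = f j f n + f j - f n - 1`, and otherwise swapping `f j` and `f n` keeps it.
Either way `f n` grows, so we may assume `f n = n` and induct on `n`. The induction stops at
`q = n`, where the bound reads `r ≤ ∏ f` with `r = 1 + ∑ (f k - 1)`, and a product of factors
`≥ 1` dominates one plus the sum of their excesses. -/

open Finset Nat

lemma choose_two_succ (n : ℕ) : (n + 1).choose 2 = n.choose 2 + n := by
  simp [Nat.choose_succ_succ', add_comm]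

@[to_additive]
lemma Finset.prod_mul_mul_eq_of_eqOn_pair_compl {ι M : Type*} [CommMonoid M] [DecidableEq ι]
    {s : Finset ι} {i j : ι} (hi : i ∈ s) (hj : j ∈ s) (hij : i ≠ j) {f g : ι → M}
    (hfg : ∀ k ∈ s, k ≠ i → k ≠ j → f k = g k) :
    (∏ k ∈ s, f k) * (g i * g j) = (∏ k ∈ s, g k) * (f i * f j) := by
  have hj' : j ∈ s.erase i := mem_erase.2 ⟨hij.symm, hj⟩
  have hrest : ∏ k ∈ (s.erase i).erase j, f k = ∏ k ∈ (s.erase i).erase j, g k :=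
    prod_congr rfl fun k hk => by
      obtain ⟨hkj, hki, hks⟩ := by simpa only [mem_erase] using hk
      exact hfg k hks hki hkj
  rw [← mul_prod_erase s f hi, ← mul_prod_erase _ f hj', ← mul_prod_erase s g hi,
    ← mul_prod_erase _ g hj', hrest]
  ac_rfl

lemma sum_tsub_one_add_one_le_prod {ι : Type*} {s : Finset ι} {f : ι → ℕ}
    (hf : ∀ k ∈ s, 1 ≤ f k) : ∑ k ∈ s, (f k - 1) + 1 ≤ ∏ k ∈ s, f k := by
  classical
  induction s using Finset.induction_on with
  | empty => simp
  | insert a s ha ih =>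
    rw [sum_insert ha, prod_insert ha]
    have hfa := hf a (mem_insert_self a s)
    specialize ih fun k hk => hf k (mem_insert_of_mem hk)
    have hprod : 1 ≤ ∏ k ∈ s, f k := by omega
    calc f a - 1 + ∑ k ∈ s, (f k - 1) + 1
        ≤ (f a - 1) * ∏ k ∈ s, f k + ∏ k ∈ s, f k := by nlinarith
      _ = f a * ∏ k ∈ s, f k := by rw [← add_one_mul, Nat.sub_add_cancel hfa]

lemma exists_replace_pair {n i j a b : ℕ} {f : ℕ → ℕ} (hf : ∀ k ∈ Icc 1 n, 1 ≤ f k ∧ f k ≤ k)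
    (hi : i ∈ Icc 1 n) (hj : j ∈ Icc 1 n) (hij : i ≠ j) (ha : 1 ≤ a ∧ a ≤ i)
    (hb : 1 ≤ b ∧ b ≤ j) (hsum : a + b = f i + f j) (hprod : a * b ≤ f i * f j) :
    ∃ g : ℕ → ℕ, (∀ k ∈ Icc 1 n, 1 ≤ g k ∧ g k ≤ k) ∧
      ∑ k ∈ Icc 1 n, (g k - 1) = ∑ k ∈ Icc 1 n, (f k - 1) ∧
      ∏ k ∈ Icc 1 n, g k ≤ ∏ k ∈ Icc 1 n, f k ∧ g j = b := by
  set g : ℕ → ℕ := fun k => if k = i then a else if k = j then b else f k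
  have hgi : g i = a := if_pos rfl
  have hgj : g j = b := by simp [g, hij.symm]
  have hoff : ∀ k ∈ Icc 1 n, k ≠ i → k ≠ j → f k = g k := fun k _ hki hkj => by
    simp [g, hki, hkj]
  refine ⟨g, fun k hk => ?_, ?_, ?_, hgj⟩
  · by_cases hki : k = i
    · subst hki; rwa [hgi]
    by_cases hkj : k = j
    · subst hkj; rwa [hgj]
    rw [← hoff k hk hki hkj]
    exact hf k hk
  · have hpair := sum_add_add_eq_of_eqOn_pair_compl hi hj hij (f := fun k => f k - 1)
      (g := fun k => g k - 1) fun k hk hki hkj => by rw [hoff k hk hki hkj]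
    simp only [hgi, hgj] at hpair
    have := (hf i hi).1
    have := (hf j hj).1
    omega
  · have key := prod_mul_mul_eq_of_eqOn_pair_compl hi hj hij hoff
    rw [hgi, hgj] at key
    refine Nat.le_of_mul_le_mul_right (c := f i * f j) ?_ ?_
    · rw [← key]
      exact Nat.mul_le_mul_left _ hprod
    · exact Nat.mul_pos (hf i hi).1 (hf j hj).1

lemma exists_exchange_raising_last {n j : ℕ} {f : ℕ → ℕ}
    (hf : ∀ k ∈ Icc 1 n, 1 ≤ f k ∧ f k ≤ k) (hj1 : 1 ≤ j) (hjn : j < n) (hfj : 2 ≤ f j) (hfn : f n < n) :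
    ∃ g : ℕ → ℕ, (∀ k ∈ Icc 1 n, 1 ≤ g k ∧ g k ≤ k) ∧
      ∑ k ∈ Icc 1 n, (g k - 1) = ∑ k ∈ Icc 1 n, (f k - 1) ∧
      ∏ k ∈ Icc 1 n, g k ≤ ∏ k ∈ Icc 1 n, f k ∧ f n < g n := by
  have hj : j ∈ Icc 1 n := mem_Icc.2 ⟨hj1, hjn.le⟩
  have hn : n ∈ Icc 1 n := mem_Icc.2 ⟨by omega, le_rfl⟩
  have hfj_le := (hf j hj).2
  have hfn_pos := (hf n hn).1
  -- Move one unit from `j` to `n` when `f j ≤ f n + 1`, otherwise swap `f j` and `f n`.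
  rcases le_or_gt (f j) (f n + 1) with hle | hlt
  · obtain ⟨g, hg, hsum, hprod, hgn⟩ := exists_replace_pair hf hj hn hjn.ne
      (a := f j - 1) (b := f n + 1) ⟨by omega, by omega⟩ ⟨by omega, by omega⟩ (by omega)
      (by zify [show 1 ≤ f j by omega] at hle ⊢; nlinarith)
    exact ⟨g, hg, hsum, hprod, by omega⟩
  · obtain ⟨g, hg, hsum, hprod, hgn⟩ := exists_replace_pair hf hj hn hjn.ne
      (a := f n) (b := f j) ⟨hfn_pos, by omega⟩ ⟨by omega, by omega⟩ (add_comm _ _)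
      (mul_comm _ _).le
    exact ⟨g, hg, hsum, hprod, by omega⟩

lemma mul_factorial_le_factorial_mul_prod_self {n r : ℕ} {f : ℕ → ℕ}
    (hf : ∀ k ∈ Icc 1 n, 1 ≤ f k)
    (hsum : ∑ k ∈ Icc 1 n, (f k - 1) + n.choose 2 + 1 = n.choose 2 + r) :
    r * n ! ≤ n ! * ∏ k ∈ Icc 1 n, f k := by
  rw [mul_comm]
  refine Nat.mul_le_mul_left _ ?_
  calc r = ∑ k ∈ Icc 1 n, (f k - 1) + 1 := by omega
    _ ≤ ∏ k ∈ Icc 1 n, f k := sum_tsub_one_add_one_le_prod hf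

theorem mul_factorial_le_factorial_mul_prod {n q r : ℕ} {f : ℕ → ℕ}
    (hf : ∀ k ∈ Icc 1 n, 1 ≤ f k ∧ f k ≤ k) (hr : 1 ≤ r) (hqn : q ≤ n)
    (hsum : ∑ k ∈ Icc 1 n, (f k - 1) + q.choose 2 + 1 = n.choose 2 + r) :
    r * n ! ≤ q ! * ∏ k ∈ Icc 1 n, f k := by
  induction n generalizing f q with
  | zero =>
    obtain rfl := Nat.le_zero.1 hqn
    exact mul_factorial_le_factorial_mul_prod_self (fun k hk => (hf k hk).1) hsum
  | succ n ih =>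
    obtain rfl | hqn := hqn.eq_or_lt
    · exact mul_factorial_le_factorial_mul_prod_self (fun k hk => (hf k hk).1) hsum
    replace hqn : q ≤ n := Nat.lt_succ_iff.1 hqn
    have hn : n + 1 ∈ Icc 1 (n + 1) := mem_Icc.2 ⟨by omega, le_rfl⟩
    induction hd : n + 1 - f (n + 1) using Nat.strong_induction_on generalizing f with
    | _ d ihd =>
    obtain ⟨hfn_pos, hfn_le⟩ := hf (n + 1) hn
    by_cases htop : f (n + 1) = n + 1
    · have hf' : ∀ k ∈ Icc 1 n, 1 ≤ f k ∧ f k ≤ k := fun k hk =>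
        hf k (Icc_subset_Icc_right n.le_succ hk)
      rw [sum_Icc_succ_top (by omega), htop, choose_two_succ] at hsum
      have hbound : r * n ! ≤ q ! * ∏ k ∈ Icc 1 n, f k := ih hf' hqn (by omega)
      rw [prod_Icc_succ_top (by omega), htop, factorial_succ]
      calc r * ((n + 1) * n !) = (n + 1) * (r * n !) := by ring
        _ ≤ (n + 1) * (q ! * ∏ k ∈ Icc 1 n, f k) := Nat.mul_le_mul_left _ hbound
        _ = q ! * ((∏ k ∈ Icc 1 n, f k) * (n + 1)) := by ring
    · -- With every lower level at `1`, the total `∑ (f k - 1)` is too small for `q ≤ n`.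
      obtain ⟨j, hj, hfj⟩ : ∃ j ∈ Icc 1 n, 2 ≤ f j := by
        by_contra! h
        have hzero : ∑ k ∈ Icc 1 n, (f k - 1) = 0 :=
          sum_eq_zero fun k hk => by have := h k hk; omega
        rw [sum_Icc_succ_top (by omega), hzero, choose_two_succ] at hsum
        have := Nat.choose_le_choose 2 hqn
        omega
      obtain ⟨g, hg, hgsum, hgprod, hgn⟩ :=
        exists_exchange_raising_last hf (mem_Icc.1 hj).1
          (Nat.lt_succ_of_le (mem_Icc.1 hj).2) hfj (by omega)
      have hgd : n + 1 - g (n + 1) < d := by omega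
      calc r * (n + 1)! ≤ q ! * ∏ k ∈ Icc 1 (n + 1), g k := ihd _ hgd hg (hgsum ▸ hsum) rfl
        _ ≤ q ! * ∏ k ∈ Icc 1 (n + 1), f k := Nat.mul_le_mul_left _ hgprod

def extremalProfile (q r k : ℕ) : ℕ := if k < q then 1 else if k = q then r else k

lemma extremalProfile_bounds {q r n k : ℕ} (hr : 1 ≤ r) (hrq : r ≤ q) (hk : k ∈ Icc 1 n) :
    1 ≤ extremalProfile q r k ∧ extremalProfile q r k ≤ k := by
  have := (mem_Icc.1 hk).1
  unfold extremalProfile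
  split_ifs <;> omega

lemma sum_prod_extremalProfile {q r n : ℕ} (hr : 1 ≤ r) (hq : 1 ≤ q) (hqn : q ≤ n) :
    ∑ k ∈ Icc 1 n, (extremalProfile q r k - 1) + q.choose 2 + 1 = n.choose 2 + r ∧
      (∏ k ∈ Icc 1 n, extremalProfile q r k) * q ! = r * n ! := by
  induction n, hqn using Nat.le_induction with
  | base =>
    obtain ⟨p, rfl⟩ := Nat.exists_eq_add_of_le' hq
    have hlow : ∀ k ∈ Icc 1 p, extremalProfile (p + 1) r k = 1 := fun k hk =>
      if_pos (Nat.lt_succ_of_le (mem_Icc.1 hk).2)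
    have htop : extremalProfile (p + 1) r (p + 1) = r := by simp [extremalProfile]
    rw [sum_Icc_succ_top (by omega), prod_Icc_succ_top (by omega),
      sum_congr rfl fun k hk => by rw [hlow k hk], prod_congr rfl hlow]
    simp only [htop, tsub_self, sum_const_zero, prod_const_one, one_mul]
    exact ⟨by omega, trivial⟩
  | succ n hqn ih =>
    have htop : extremalProfile q r (n + 1) = n + 1 := by
      simp [extremalProfile, show ¬ n + 1 < q by omega, show n + 1 ≠ q by omega]
    rw [sum_Icc_succ_top (by omega), prod_Icc_succ_top (by omega), htop, choose_two_succ,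
      factorial_succ]
    constructor
    · omega
    · rw [mul_left_comm r, ← ih.2]; ring

theorem stmt_16_general (n s q r : ℕ)
    (hr : 1 ≤ r) (hrq : r < q) (hq : q ≤ n)
    (heq : (n.choose 2 : ℤ) - s - 1 = (q.choose 2 : ℤ) - r) :
    (∀ f : ℕ → ℕ, (∀ k ∈ Finset.Icc 1 n, 1 ≤ f k ∧ f k ≤ k) →
        ∑ k ∈ Finset.Icc 1 n, (f k - 1) = s →
        r * (n.factorial / q.factorial) ≤ ∏ k ∈ Finset.Icc 1 n, f k) ∧
    (∃ f : ℕ → ℕ, (∀ k ∈ Finset.Icc 1 n, 1 ≤ f k ∧ f k ≤ k) ∧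
        ∑ k ∈ Finset.Icc 1 n, (f k - 1) = s ∧
        ∏ k ∈ Finset.Icc 1 n, f k = r * (n.factorial / q.factorial)) := by
  have hs : s + q.choose 2 + 1 = n.choose 2 + r := by omega
  have hdvd : q ! ∣ n ! := Nat.factorial_dvd_factorial hq
  obtain ⟨hwsum, hwprod⟩ := sum_prod_extremalProfile (n := n) hr (by omega) hq
  rw [← Nat.mul_div_assoc _ hdvd]
  refine ⟨fun f hf hsum => ?_, extremalProfile q r,
    fun k hk => extremalProfile_bounds hr hrq.le hk, by omega, ?_⟩
  · exact Nat.div_le_of_le_mul (mul_factorial_le_factorial_mul_prod hf hr hq (by omega))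
  · exact (Nat.div_eq_of_eq_mul_left (factorial_pos q) hwprod.symm).symm

/-- Extremal lemma: among sequences `s₁,…,s_n` with `1 ≤ s_k ≤ k` and `Σ(s_k − 1) = s`,
the minimum of `∏ s_k` is `r · n!/q!`, where `q`, `r` are the unique integers with
`1 ≤ r < q ≤ n` and `C(n,2) − s − 1 = C(q,2) − r`. -/
theorem stmt_16 (n s q r : ℕ) (hn : 2 ≤ n) (hs : s < n.choose 2)
    (hr : 1 ≤ r) (hrq : r < q) (hq : q ≤ n)
    (heq : (n.choose 2 : ℤ) - s - 1 = (q.choose 2 : ℤ) - r) :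
    (∀ f : ℕ → ℕ, (∀ k ∈ Finset.Icc 1 n, 1 ≤ f k ∧ f k ≤ k) →
        ∑ k ∈ Finset.Icc 1 n, (f k - 1) = s →
        r * (n.factorial / q.factorial) ≤ ∏ k ∈ Finset.Icc 1 n, f k) ∧
    (∃ f : ℕ → ℕ, (∀ k ∈ Finset.Icc 1 n, 1 ≤ f k ∧ f k ≤ k) ∧
        ∑ k ∈ Finset.Icc 1 n, (f k - 1) = s ∧
        ∏ k ∈ Finset.Icc 1 n, f k = r * (n.factorial / q.factorial)) :=
  stmt_16_general n s q r hr hrq hq heq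
end

section
/- Let n ≥ 2 and 0 ≤ s < C(n,2) be integers, and let q, r be the unique integers with 1 ≤ r < q ≤ n and C(n,2) − s − 1 = C(q,2) − r. Then n − q ≥ ⌊s/n⌋. -/
theorem Nat.choose_two_le_choose_two_add_mul {q n : ℕ} (hq : q ≤ n) :
    n.choose 2 ≤ q.choose 2 + (n - q) * (n - 1) := by
  induction n, hq using Nat.le_induction with
  | base => simp
  | succ m hqm ih =>
    have hstep : (m + 1).choose 2 = m.choose 2 + m := by
      rw [Nat.choose_succ_succ, Nat.choose_one_right, add_comm]
    have hmono : (m - q) * (m - 1) ≤ (m - q) * m := Nat.mul_le_mul_left _ (Nat.sub_le m 1)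
    rw [hstep, Nat.add_sub_cancel, Nat.sub_add_comm hqm, Nat.succ_mul]
    omega

theorem stmt_17_general (n s q r : ℕ)
    (hrq : r < q) (hq : q ≤ n)
    (heq : (n.choose 2 : ℤ) - s - 1 = (q.choose 2 : ℤ) - r) :
    s / n ≤ n - q := by
  have hsum : s + 1 + q.choose 2 = n.choose 2 + r := by omega
  have hchoose := Nat.choose_two_le_choose_two_add_mul hq
  have hmono : (n - q) * (n - 1) ≤ (n - q) * n := Nat.mul_le_mul_left _ (Nat.sub_le n 1)
  have hs : s < (n - q + 1) * n := by rw [Nat.succ_mul]; omega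
  have := Nat.div_lt_of_lt_mul (by rwa [mul_comm] at hs)
  omega

/-- With `q`, `r` the unique integers satisfying `1 ≤ r < q ≤ n` and
`C(n,2) − s − 1 = C(q,2) − r`, we have `n − q ≥ ⌊s/n⌋`. -/
theorem stmt_17 (n s q r : ℕ) (hn : 2 ≤ n) (hs : s < n.choose 2)
    (hr : 1 ≤ r) (hrq : r < q) (hq : q ≤ n)
    (heq : (n.choose 2 : ℤ) - s - 1 = (q.choose 2 : ℤ) - r) :
    s / n ≤ n - q :=
  stmt_17_general n s q r hrq hq heq
end

section
/- Let n and s be integers with n ≤ s < n²/4, and let q, r be the unique integers with 1 ≤ r < q ≤ n and C(n,2) − s − 1 = C(q,2) − r. Then, as real numbers, r·n!/q! > (n/2)^(s/n − 1), where the right-hand side is the real power of n/2 with real exponent s/n − 1. -/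
/-!
Since `r ≥ 1`, the quotient `r·n!/q!` is at least `n!/q! ≥ (q+1)^(n-q)`. Writing
`2s = n(n-1) - q(q-1) + 2r - 2`, the bound `s < n²/4` forces `q > n/2`, so `q + 1 > n/2`,
while `r < q` gives `s < n(n-q+1)`, i.e. the exponent `s/n - 1` is below `n - q`.
-/

open Nat

theorem pow_le_factorial_div_factorial {q n : ℕ} (h : q ≤ n) :
    ((q : ℝ) + 1) ^ (n - q) ≤ (n ! : ℝ) / q ! := by
  rw [le_div_iff₀ (by positivity), mul_comm]
  have key := Nat.factorial_mul_pow_le_factorial (m := q) (n := n - q)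
  rw [Nat.add_sub_cancel' h] at key
  exact_mod_cast key

section

variable {n s q r : ℕ}

theorem two_mul_eq_of_choose_two_sub (heq : (n.choose 2 : ℤ) - s - 1 = (q.choose 2 : ℤ) - r) :
    2 * (s : ℝ) = n * (n - 1) - q * (q - 1) + 2 * r - 2 := by
  have h := congrArg (Int.cast : ℤ → ℝ) heq
  push_cast [Nat.cast_choose_two] at h
  linarith

variable (hkey : 2 * (s : ℝ) = n * (n - 1) - q * (q - 1) + 2 * r - 2)
include hkey

theorem lt_of_two_mul_eq (hns : n ≤ s) (hrq : r < q) (hq : q ≤ n) : q < n := by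
  refine lt_of_le_of_ne hq fun hqn => ?_
  subst hqn
  have : (s : ℝ) < q := by linarith [(Nat.cast_lt (α := ℝ)).2 hrq]
  exact absurd hns (by exact_mod_cast this.not_ge)

theorem lt_two_mul_of_two_mul_eq (hs : 4 * s < n ^ 2) (hr : 1 ≤ r) (hn : 3 ≤ n) :
    n < 2 * q := by
  by_contra! h
  have hs' : 4 * (s : ℝ) < n ^ 2 := by exact_mod_cast hs
  have hr' : (1 : ℝ) ≤ r := by exact_mod_cast hr
  have h' : 2 * (q : ℝ) ≤ n := by exact_mod_cast h
  have hn' : (3 : ℝ) ≤ n := by exact_mod_cast hn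
  nlinarith [mul_nonneg (sub_nonneg.2 h') (show (0 : ℝ) ≤ 2 * q by positivity)]

theorem lt_mul_sub_add_one_of_two_mul_eq (hrq : r < q) (hq : q ≤ n) :
    (s : ℝ) < n * (n - q + 1) := by
  have hrq' : (r : ℝ) + 1 ≤ q := by exact_mod_cast hrq
  have hq' : (q : ℝ) ≤ n := by exact_mod_cast hq
  nlinarith [sq_nonneg ((n : ℝ) - q)]

end

/-- For `n ≤ s < n²/4` and `q`, `r` the unique integers with `1 ≤ r < q ≤ n` and
`C(n,2) − s − 1 = C(q,2) − r`, the minimal product satisfies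
`r·n!/q! > (n/2)^(s/n − 1)` as real numbers. -/
theorem stmt_18 (n s q r : ℕ) (hns : n ≤ s) (hs : 4 * s < n ^ 2)
    (hr : 1 ≤ r) (hrq : r < q) (hq : q ≤ n)
    (heq : (n.choose 2 : ℤ) - s - 1 = (q.choose 2 : ℤ) - r) :
    ((n : ℝ) / 2) ^ ((s : ℝ) / (n : ℝ) - 1) <
      (r : ℝ) * (n.factorial : ℝ) / (q.factorial : ℝ) := by
  have hkey := two_mul_eq_of_choose_two_sub heq
  have hqn := lt_of_two_mul_eq hkey hns hrq hq
  have hn : 5 ≤ n := by nlinarith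
  have hn' : (5 : ℝ) ≤ n := by exact_mod_cast hn
  have hq2 : (n : ℝ) < 2 * q := by exact_mod_cast lt_two_mul_of_two_mul_eq hkey hs hr (by omega)
  have hexp : (s : ℝ) / n - 1 < (n - q : ℕ) := by
    rw [Nat.cast_sub hq, sub_lt_iff_lt_add, div_lt_iff₀ (by positivity)]
    linarith [lt_mul_sub_add_one_of_two_mul_eq hkey hrq hq]
  calc ((n : ℝ) / 2) ^ ((s : ℝ) / n - 1)
      < ((n : ℝ) / 2) ^ (n - q) := by
        rw [← Real.rpow_natCast]
        exact Real.rpow_lt_rpow_of_exponent_lt (by linarith) hexp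
    _ ≤ ((q : ℝ) + 1) ^ (n - q) := pow_le_pow_left₀ (by positivity) (by linarith) _
    _ ≤ (n ! : ℝ) / q ! := pow_le_factorial_div_factorial hq
    _ ≤ r * n ! / q ! := by
        rw [mul_div_assoc]
        exact le_mul_of_one_le_left (by positivity) (by exact_mod_cast hr)
end
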